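/- Let n be a positive integer not divisible by 3. If Π₁ and Π₂ are (3,n)-Dyck paths with area(Π₁) = area(Π₂), skips(Π₁) = skips(Π₂), and dinv(Π₁) = dinv(Π₂), then Π₁ = Π₂. -/

import Mathlib

open MvPolynomial

/-- An `(m,n)`-Dyck path: a north/east lattice path from `(0,0)` to `(m,n)` staying
weakly above the diagonal `y = (n/m)x`.  Such a path is encoded by recording, for each
of the `m` columns (indexed `0,…,m-1` from left to right), the number of cells of that
column lying above the path; this gives an antitone sequence, and the diagonal
condition for the east step in column `i` reads `m * c i ≤ n * (m - 1 - i)`. -/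
def DyckPath (m n : ℕ) : Type :=
  {c : Fin m → Fin (n + 1) //
    (∀ i j : Fin m, i ≤ j → (c j : ℕ) ≤ (c i : ℕ)) ∧
      ∀ i : Fin m, m * (c i : ℕ) ≤ n * (m - 1 - (i : ℕ))}

noncomputable instance instFintypeDyckPath (m n : ℕ) : Fintype (DyckPath m n) := by
  classical
  unfold DyckPath
  infer_instance

namespace DyckPath

variable {m n : ℕ}

/-- `λ(Π)`, the set of cells of the `m × n` lattice lying above the path `Π`.
The cell `(i, j)` (with `i : Fin m`, `j : Fin n`) is the cell in column `i + 1`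
(from the left) and row `j + 1` (from the bottom) in the paper's 1-based indexing. -/
def cellsAbove (P : DyckPath m n) : Set (Fin m × Fin n) :=
  {x | n - (P.1 x.1 : ℕ) ≤ (x.2 : ℕ)}

/-- `arm(x)`: the number of cells of `λ(Π)` strictly east of `x` (in the row of `x`). -/
noncomputable def arm (P : DyckPath m n) (x : Fin m × Fin n) : ℕ :=
  {y ∈ P.cellsAbove | x.1 < y.1 ∧ y.2 = x.2}.ncard

/-- `leg(x)`: the number of cells of `λ(Π)` strictly south of `x` (in the column of `x`). -/
noncomputable def leg (P : DyckPath m n) (x : Fin m × Fin n) : ℕ :=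
  {y ∈ P.cellsAbove | y.1 = x.1 ∧ y.2 < x.2}.ncard

end DyckPath

/-- The dinv condition `arm/(leg+1) < m/n < (arm+1)/leg` for a cell with given arm `a`
and leg `l`, the right inequality being interpreted as true when `l = 0`. -/
def dinvCond (m n a l : ℕ) : Prop :=
  (a : ℚ) / ((l : ℚ) + 1) < (m : ℚ) / (n : ℚ) ∧
    (l = 0 ∨ (m : ℚ) / (n : ℚ) < ((a : ℚ) + 1) / (l : ℚ))

namespace DyckPath

variable {m n : ℕ}

/-- `dinv(Π)`: the number of cells `x ∈ λ(Π)` with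
`arm(x)/(leg(x)+1) < m/n < (arm(x)+1)/leg(x)`. -/
noncomputable def dinv (P : DyckPath m n) : ℕ :=
  {x ∈ P.cellsAbove | dinvCond m n (P.arm x) (P.leg x)}.ncard

/-- `area(Π)`: the number of cells of the lattice lying entirely between the path and
the diagonal, i.e. cells lying entirely weakly above the diagonal `y = (n/m)x` and
below the path. -/
noncomputable def area (P : DyckPath m n) : ℕ :=
  {x : Fin m × Fin n | n * ((x.1 : ℕ) + 1) ≤ m * (x.2 : ℕ) ∧ x ∉ P.cellsAbove}.ncard

end DyckPath

/-- The `(m,n)`-rational `q,t`-Catalan polynomial `C_{m,n}(q,t)`, with `q = X 0` and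
`t = X 1`:  `C_{m,n}(q,t) = Σ_Π q^{dinv(Π)} t^{area(Π)}` over all `(m,n)`-Dyck paths. -/
noncomputable def ratCatalan (m n : ℕ) : MvPolynomial (Fin 2) ℤ :=
  ∑ P : DyckPath m n, X 0 ^ P.dinv * X 1 ^ P.area

/-- The rank of the cell `(i, j)` of the `3 × n` lattice: in the paper's 1-based
coordinates `(a, b) = (i+1, j+1)`, this is `R(a,b) = -a·n + 3(b-1)`. -/
def cellRank (n : ℕ) (x : Fin 3 × Fin n) : ℤ :=
  3 * (x.2 : ℤ) - ((x.1 : ℤ) + 1) * (n : ℤ)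

/-- The set of positive ranks of the `3 × n` lattice: these, in increasing order, are
the entries of the rank word. -/
def posRank (n : ℕ) : Set ℤ :=
  {r | 0 < r ∧ ∃ x : Fin 3 × Fin n, cellRank n x = r}

/-- The set of marked ranks of a `(3,n)`-Dyck path: the ranks of the cells above
the path. -/
def markedRank {n : ℕ} (P : DyckPath 3 n) : Set ℤ :=
  cellRank n '' P.cellsAbove

/-- `skips(Π)`: the number of skips of `Π`, i.e. of maximal blocks of consecutive
unmarked entries of the rank word of `Π` having at least one marked entry to the left
and at least one marked entry to the right.  Each such block is counted through its
rightmost entry `r`: `r` is an unmarked entry, some marked entry lies to its left, and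
the next entry of the rank word after `r` is marked. -/
noncomputable def DyckPath.skips {n : ℕ} (P : DyckPath 3 n) : ℕ :=
  {r : ℤ | r ∈ posRank n ∧ r ∉ markedRank P ∧
    (∃ l ∈ markedRank P, l < r) ∧
    ∃ s ∈ markedRank P, r < s ∧ ∀ t ∈ posRank n, r < t → s ≤ t}.ncard

/-!
The third column of a `(3,n)`-Dyck path lies entirely below it, so the path is determined by
the numbers `a ≥ b` of cells above it in the first two columns, and both statistics are explicit
in `a` and `b`. The area is a constant minus `a + b`. Writing `q = ⌊n/3⌋`, so that
`⌈n/3⌉ = q + 1` because `3 ∤ n`, the dinv is `a + (a - q)⁺` when `a - b ≤ q` and `q + 1 + 2b`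
otherwise. For fixed `a + b` each branch is injective in `a`, and the branches never agree, since
that would need `2 (a - q) = 2b + 1`.
-/

theorem Set.ncard_eq_sum_ncard_preimage_mk {α β : Type*} [Fintype α] [Fintype β]
    (S : Set (α × β)) : S.ncard = ∑ a, (Prod.mk a ⁻¹' S).ncard := by
  classical
  rw [Set.ncard_eq_toFinset_card' S,
    Finset.card_eq_sum_card_fiberwise (f := Prod.fst) (t := Finset.univ)
      fun _ _ ↦ Finset.mem_univ _]
  refine Finset.sum_congr rfl fun a _ ↦ ?_
  rw [← Set.ncard_image_of_injective _ (Prod.mk_right_injective a), ← Set.ncard_coe_finset]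
  congr 1
  ext ⟨x, y⟩
  aesop

theorem Fin.ncard_eq_ncard_of_mem_iff {n : ℕ} {s : Set (Fin n)} {t : Set ℕ}
    (ht : t ⊆ Set.Iio n) (hst : ∀ j : Fin n, j ∈ s ↔ (j : ℕ) ∈ t) : s.ncard = t.ncard := by
  rw [show s = Fin.val ⁻¹' t from Set.ext hst]
  exact Set.ncard_preimage_of_injective_subset_range Fin.val_injective (Fin.range_val ▸ ht)

theorem Fin.ncard_eq_sub_of_mem_iff {n lo hi : ℕ} {s : Set (Fin n)} (hhi : hi ≤ n)
    (hs : ∀ j : Fin n, j ∈ s ↔ lo ≤ j ∧ (j : ℕ) < hi) : s.ncard = hi - lo := by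
  rw [← Set.ncard_Ico_nat]
  exact Fin.ncard_eq_ncard_of_mem_iff (fun j hj ↦ hj.2.trans_le hhi) hs

theorem dinvCond_iff {m n a l : ℕ} (hn : 0 < n) :
    dinvCond m n a l ↔ a * n < m * (l + 1) ∧ (l = 0 ∨ m * l < (a + 1) * n) := by
  have hn' : (0 : ℚ) < n := by exact_mod_cast hn
  rw [dinvCond, div_lt_div_iff₀ (by positivity) hn']
  rcases Nat.eq_zero_or_pos l with rfl | hl
  · simp only [true_or, and_true]; norm_cast
  · rw [div_lt_div_iff₀ hn' (by exact_mod_cast hl)]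
    simp only [hl.ne', false_or]
    norm_cast

namespace DyckPath

section Cells

variable {m n : ℕ} (P : DyckPath m n)

theorem mem_cellsAbove {x : Fin m × Fin n} : x ∈ P.cellsAbove ↔ n - (P.1 x.1 : ℕ) ≤ x.2 :=
  Iff.rfl

theorem leg_mk (i : Fin m) (j : Fin n) : P.leg (i, j) = j - (n - (P.1 i : ℕ)) := by
  have : {y ∈ P.cellsAbove | y.1 = i ∧ y.2 < j} =
      Prod.mk i '' {k : Fin n | n - (P.1 i : ℕ) ≤ k ∧ k < j} := by
    ext ⟨y1, y2⟩
    simp only [mem_cellsAbove, Set.mem_ofPred_eq, Set.mem_image, Prod.mk.injEq]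
    constructor
    · rintro ⟨h, rfl, hy⟩; exact ⟨y2, ⟨h, hy⟩, rfl, rfl⟩
    · rintro ⟨k, ⟨h, hk⟩, rfl, rfl⟩; exact ⟨h, rfl, hk⟩
  rw [leg, this, Set.ncard_image_of_injective _ (Prod.mk_right_injective i)]
  exact Fin.ncard_eq_sub_of_mem_iff j.2.le fun k ↦ Iff.rfl

theorem arm_mk (i : Fin m) (j : Fin n) :
    P.arm (i, j) = {k : Fin m | i < k ∧ n - (P.1 k : ℕ) ≤ j}.ncard := by
  have : {y ∈ P.cellsAbove | i < y.1 ∧ y.2 = j} =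
      (fun k ↦ (k, j)) '' {k : Fin m | i < k ∧ n - (P.1 k : ℕ) ≤ j} := by
    ext ⟨y1, y2⟩
    simp only [mem_cellsAbove, Set.mem_ofPred_eq, Set.mem_image, Prod.mk.injEq]
    constructor
    · rintro ⟨h, hy, rfl⟩; exact ⟨y1, ⟨hy, h⟩, rfl, rfl⟩
    · rintro ⟨k, ⟨hk, h⟩, rfl, rfl⟩; exact ⟨h, hk, rfl⟩
  rw [arm, this, Set.ncard_image_of_injective _ (Prod.mk_left_injective j)]

def dinvCells (P : DyckPath m n) : Set (Fin m × Fin n) :=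
  {x ∈ P.cellsAbove | dinvCond m n (P.arm x) (P.leg x)}

theorem ncard_dinvCells : P.dinvCells.ncard = P.dinv :=
  rfl

end Cells

section ThreeColumns

variable {n : ℕ} (P : DyckPath 3 n)

theorem val_two_eq_zero : (P.1 2 : ℕ) = 0 := by
  simpa using P.2.2 2

theorem val_one_le_val_zero : (P.1 1 : ℕ) ≤ P.1 0 :=
  P.2.1 0 1 (by decide)

theorem three_mul_val_zero_le : 3 * (P.1 0 : ℕ) ≤ 2 * n := by
  simpa [mul_comm] using P.2.2 0

theorem three_mul_val_one_le : 3 * (P.1 1 : ℕ) ≤ n := by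
  simpa using P.2.2 1

theorem arm_zero_mk (j : Fin n) : P.arm (0, j) = if n - (P.1 1 : ℕ) ≤ j then 1 else 0 := by
  have hj := j.2
  have h2 := P.val_two_eq_zero
  rw [arm_mk, Set.ncard_eq_toFinset_card', Set.toFinset_ofPred, Finset.card_filter,
    Fin.sum_univ_three]
  simp [h2, hj.not_ge]

theorem arm_one_mk (j : Fin n) : P.arm (1, j) = 0 := by
  have hj := j.2
  have h2 := P.val_two_eq_zero
  rw [arm_mk, Set.ncard_eq_toFinset_card', Set.toFinset_ofPred, Finset.card_filter,
    Fin.sum_univ_three]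
  simp [h2, hj.not_ge]

theorem area_eq : P.area = (n - P.1 0 - (n + 2) / 3) + (n - P.1 1 - (2 * n + 2) / 3) := by
  rw [area, Set.ncard_eq_sum_ncard_preimage_mk, Fin.sum_univ_three,
    Fin.ncard_eq_sub_of_mem_iff (lo := (n + 2) / 3) (hi := n - P.1 0) (Nat.sub_le _ _),
    Fin.ncard_eq_sub_of_mem_iff (lo := (2 * n + 2) / 3) (hi := n - P.1 1) (Nat.sub_le _ _),
    Fin.ncard_eq_sub_of_mem_iff (lo := n) (hi := n) le_rfl]
  · simp
  all_goals
    intro j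
    simp only [Set.mem_preimage, Set.mem_ofPred_eq, mem_cellsAbove]
    omega

theorem ncard_preimage_mk_zero_dinvCells (hn : 0 < n) :
    (Prod.mk 0 ⁻¹' P.dinvCells).ncard = min (P.1 0 - P.1 1 : ℕ) ((n + 2) / 3)
      + (P.1 0 - max (P.1 0 - P.1 1 : ℕ) (n / 3)) := by
  have h0 := P.three_mul_val_zero_le
  set a : ℕ := (P.1 0 : ℕ)
  set b : ℕ := (P.1 1 : ℕ)
  rw [Fin.ncard_eq_ncard_of_mem_iff (t := Set.Ico (n - a) (n - a + min (a - b) ((n + 2) / 3)) ∪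
    Set.Ico (n - a + max (a - b) (n / 3)) n), Set.ncard_union_eq, Set.ncard_Ico_nat,
    Set.ncard_Ico_nat]
  · omega
  · rw [Set.disjoint_left]
    intro j hj hj'
    simp only [Set.mem_Ico] at hj hj'
    omega
  · intro j hj
    simp only [Set.mem_union, Set.mem_Ico] at hj
    simp only [Set.mem_Iio]
    omega
  · intro j
    simp only [dinvCells, Set.mem_preimage, Set.mem_ofPred_eq, mem_cellsAbove, arm_zero_mk,
      leg_mk, dinvCond_iff hn, Set.mem_union, Set.mem_Ico]
    split_ifs <;> omega

theorem ncard_preimage_mk_one_dinvCells (hn : 0 < n) :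
    (Prod.mk 1 ⁻¹' P.dinvCells).ncard = P.1 1 := by
  have h1 := P.three_mul_val_one_le
  rw [Fin.ncard_eq_sub_of_mem_iff (lo := n - P.1 1) (hi := n) le_rfl]
  · omega
  · intro j
    simp only [dinvCells, Set.mem_preimage, Set.mem_ofPred_eq, mem_cellsAbove, arm_one_mk,
      leg_mk, dinvCond_iff hn]
    omega

theorem preimage_mk_two_dinvCells : Prod.mk 2 ⁻¹' P.dinvCells = ∅ := by
  have h2 := P.val_two_eq_zero
  rw [Set.eq_empty_iff_forall_notMem]
  rintro j ⟨hj : n - (P.1 2 : ℕ) ≤ j, -⟩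
  omega

theorem dinv_eq (hn : 0 < n) :
    P.dinv = min (P.1 0 - P.1 1 : ℕ) ((n + 2) / 3) + (P.1 0 - max (P.1 0 - P.1 1 : ℕ) (n / 3))
      + P.1 1 := by
  rw [← ncard_dinvCells, Set.ncard_eq_sum_ncard_preimage_mk, Fin.sum_univ_three,
    ncard_preimage_mk_zero_dinvCells P hn, ncard_preimage_mk_one_dinvCells P hn,
    preimage_mk_two_dinvCells, Set.ncard_empty, add_zero]

theorem ext_of_val_zero_of_val_one {P Q : DyckPath 3 n} (h0 : (P.1 0 : ℕ) = Q.1 0)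
    (h1 : (P.1 1 : ℕ) = Q.1 1) : P = Q := by
  refine Subtype.ext (funext fun i ↦ Fin.ext ?_)
  fin_cases i
  exacts [h0, h1, P.val_two_eq_zero.trans Q.val_two_eq_zero.symm]

end ThreeColumns

end DyckPath

theorem dyckPath_eq_of_stats_eq_general (n : ℕ) (hn : 0 < n) (h3 : ¬ (3 ∣ n))
    (P₁ P₂ : DyckPath 3 n) (harea : P₁.area = P₂.area)
    (hdinv : P₁.dinv = P₂.dinv) :
    P₁ = P₂ := by
  rw [DyckPath.area_eq, DyckPath.area_eq] at harea
  rw [DyckPath.dinv_eq P₁ hn, DyckPath.dinv_eq P₂ hn] at hdinv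
  have := P₁.val_one_le_val_zero
  have := P₂.val_one_le_val_zero
  have := P₁.three_mul_val_zero_le
  have := P₂.three_mul_val_zero_le
  have := P₁.three_mul_val_one_le
  have := P₂.three_mul_val_one_le
  exact DyckPath.ext_of_val_zero_of_val_one (by omega) (by omega)

/-- Two `(3,n)`-Dyck paths with the same area, skips and dinv
statistics are equal. -/
theorem dyckPath_eq_of_stats_eq (n : ℕ) (hn : 0 < n) (h3 : ¬ (3 ∣ n))
    (P₁ P₂ : DyckPath 3 n) (harea : P₁.area = P₂.area) (hskips : P₁.skips = P₂.skips)
    (hdinv : P₁.dinv = P₂.dinv) :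
    P₁ = P₂ :=
  dyckPath_eq_of_stats_eq_general n hn h3 P₁ P₂ harea hdinv
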